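/- arXiv:0710.0193 — 2 statements merged into one kernel-verified Lean document; each statement's English description precedes it below -/
import Mathlib

section
/- Let {μ_u : u ∈ K₂} be a K₂-parameter convolution semigroup on ℝ^d and {ρ_s : s ∈ K₁} a K₁-parameter convolution semigroup on ℝ^{N₂} supported on K₂. Define σ_s(B) = ∫_{K₂} μ_u(B) ρ_s(du) for Borel sets B ⊆ ℝ^d. Then {σ_s : s ∈ K₁} is a K₁-parameter convolution semigroup on ℝ^d. -/
open MeasureTheory Filter Set
open scoped Topology Pointwise ENNReal NNReal BoundedContinuousFunction

noncomputable section

/-- Euclidean space ℝ^n. -/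
abbrev Euc (n : ℕ) := EuclideanSpace ℝ (Fin n)

section Defs

variable {F G : Type*} [NormedAddCommGroup F] [InnerProductSpace ℝ F]
  [MeasurableSpace F] [BorelSpace F]

/-- Convolution of two measures. -/
def mconv (μ ν : Measure F) : Measure F := (μ.prod ν).map (fun p => p.1 + p.2)

/-- n-fold convolution power. -/
def nconv (μ : Measure F) : ℕ → Measure F
  | 0 => Measure.dirac 0
  | k + 1 => mconv μ (nconv μ k)

/-- Characteristic function of a measure. -/
def charFn (μ : Measure F) (z : F) : ℂ :=
  ∫ x, Complex.exp (Complex.I * ((inner ℝ z x : ℝ) : ℂ)) ∂μ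

/-- Infinitely divisible distribution. -/
def IsID (μ : Measure F) : Prop :=
  ∀ k : ℕ, 1 ≤ k → ∃ ν : Measure F, IsProbabilityMeasure ν ∧ nconv ν k = μ

/-- Selfdecomposable distribution. -/
def IsSelfdecomp (μ : Measure F) : Prop :=
  ∀ b : ℝ, 1 < b → ∃ ν : Measure F, IsProbabilityMeasure ν ∧
    ∀ z, charFn μ z = charFn μ (b⁻¹ • z) * charFn ν z

/-- The nested classes `L_m(b⁻¹)`: `InL 0 b μ` is semi-selfdecomposability with span `b`
(the cofactor is infinitely divisible), and `InL (m+1) b μ` requires a cofactor in `L_m`. -/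
def InL : ℕ → ℝ → Measure F → Prop
  | 0, b, μ => ∃ ν : Measure F, IsProbabilityMeasure ν ∧ IsID ν ∧
      ∀ z, charFn μ z = charFn μ (b⁻¹ • z) * charFn ν z
  | m + 1, b, μ => ∃ ν : Measure F, IsProbabilityMeasure ν ∧ IsID ν ∧
      (∀ z, charFn μ z = charFn μ (b⁻¹ • z) * charFn ν z) ∧ InL m b ν

/-- A cone: nonempty closed convex set, closed under multiplication by nonnegative reals,
containing no straight line through 0, and not equal to {0}. -/
def IsCone (K : Set F) : Prop :=
  K.Nonempty ∧ IsClosed K ∧ Convex ℝ K ∧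
  (∀ c : ℝ, 0 ≤ c → ∀ x ∈ K, c • x ∈ K) ∧
  (∀ x ∈ K, x ≠ 0 → -x ∉ K) ∧ K ≠ {0}

/-- A `K`-parameter convolution semigroup: probability measures satisfying
`μ s₁ * μ s₂ = μ (s₁ + s₂)` and `μ (t • s) → δ₀` weakly as `t ↓ 0`. -/
def IsConvSemigroup [NormedAddCommGroup G] [InnerProductSpace ℝ G]
    [MeasurableSpace G] [BorelSpace G] (K : Set F) (μ : F → Measure G) : Prop :=
  (∀ s ∈ K, IsProbabilityMeasure (μ s)) ∧
  (∀ s₁ ∈ K, ∀ s₂ ∈ K, mconv (μ s₁) (μ s₂) = μ (s₁ + s₂)) ∧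
  (∀ s ∈ K, ∀ f : G →ᵇ ℝ,
    Tendsto (fun t : ℝ => ∫ x, f x ∂(μ (t • s))) (𝓝[>] (0 : ℝ)) (𝓝 (f 0)))

/-- Strictly α-semistable with span `b`: infinitely divisible with
`charFn μ z ^ (b^α) = charFn μ (b • z)`. -/
def IsStrictSemistable (α b : ℝ) (μ : Measure F) : Prop :=
  IsID μ ∧ ∀ z, charFn μ z ^ (((b ^ α : ℝ) : ℂ)) = charFn μ (b • z)

end Defs

open ProbabilityTheory

/-!
Write `σ_s = κ ∘ₘ ρ_s`, where `κ` is the Markov kernel equal to `μ` on `K₂` and to `δ₀` off `K₂`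
(this changes nothing, as `ρ_s` lives on `K₂`). Then `σ_{s₁} ∗ σ_{s₂}` is the mixture of
`μ_u ∗ μ_v = μ_{u+v}` under `ρ_{s₁} ⊗ ρ_{s₂}`, that is, the mixture of `μ_w` under
`ρ_{s₁} ∗ ρ_{s₂} = ρ_{s₁+s₂}`.

For continuity, `∫ f dσ_{ts} = ∫ G dρ_{ts}` with `G u = ∫ f dμ_u` bounded, so it suffices that `G`
be continuous at `0`, i.e. that `μ_u → δ₀` as `u → 0` in `K₂`; the hypothesis only gives this along
rays. Choose a basis `b_i` of the span of `K₂` inside `K₂` and split the (linear, hence continuous)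
coordinates of `u ∈ K₂` as `c_i = c_i⁺ - c_i⁻`. Then `u + ∑ c_i⁻ b_i = ∑ c_i⁺ b_i`, so the characteristic function of `μ_u`
is a quotient of two products of characteristic functions along rays, each tending to `1`, and
Lévy's continuity theorem concludes.
-/

namespace IsCone

variable {F : Type*} [NormedAddCommGroup F] [InnerProductSpace ℝ F] {K : Set F}

theorem smul_mem (hK : IsCone K) {c : ℝ} (hc : 0 ≤ c) {x : F} (hx : x ∈ K) : c • x ∈ K :=
  hK.2.2.2.1 c hc x hx

theorem zero_mem (hK : IsCone K) : (0 : F) ∈ K := by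
  obtain ⟨x, hx⟩ := hK.1
  simpa using hK.smul_mem le_rfl hx

theorem add_mem (hK : IsCone K) {x y : F} (hx : x ∈ K) (hy : y ∈ K) : x + y ∈ K := by
  have hmid := hK.2.2.1 hx hy (by norm_num : (0 : ℝ) ≤ 1 / 2) (by norm_num : (0 : ℝ) ≤ 1 / 2)
    (by norm_num)
  simpa [smul_add, smul_smul] using hK.smul_mem zero_le_two hmid

theorem measurableSet [MeasurableSpace F] [OpensMeasurableSpace F] (hK : IsCone K) :
    MeasurableSet K :=
  hK.2.1.measurableSet

def toPointedCone (hK : IsCone K) : PointedCone ℝ F where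
  carrier := K
  add_mem' := hK.add_mem
  zero_mem' := hK.zero_mem
  smul_mem' c _ hx := hK.smul_mem c.2 hx

end IsCone

section ConeContinuity

variable {F : Type*} [NormedAddCommGroup F] [NormedSpace ℝ F]

theorem exists_sum_smul_eq_of_mem [FiniteDimensional ℝ F] (S : Set F) :
    ∃ (n : ℕ) (b : Fin n → F) (c : Fin n → StrongDual ℝ F),
      (∀ i, b i ∈ S) ∧ ∀ u ∈ S, ∑ i, c i u • b i = u := by
  obtain ⟨t, htS, hspan, hli⟩ := exists_linearIndependent ℝ S
  have : Fintype t := hli.setFinite.fintype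
  let e := Fintype.equivFin t
  let B := Module.Basis.span hli
  obtain ⟨g, hg⟩ := LinearMap.exists_extend B.equivFun.toLinearMap
  refine ⟨Fintype.card t, fun i => e.symm i, fun i =>
    LinearMap.toContinuousLinearMap ((LinearMap.proj (e.symm i)).comp g),
    fun i => htS (e.symm i).2, fun u hu => ?_⟩
  have huV : u ∈ Submodule.span ℝ (Set.range ((↑) : t → F)) := by
    rw [Subtype.range_coe, hspan]
    exact Submodule.subset_span hu
  have hgu : g u = B.equivFun ⟨u, huV⟩ := LinearMap.congr_fun hg ⟨u, huV⟩
  have hB := congrArg Subtype.val (B.sum_equivFun ⟨u, huV⟩)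
  simp only [Submodule.coe_sum, SetLike.val_smul, B, Module.Basis.span_apply] at hB
  simp only [LinearMap.coe_toContinuousLinearMap', LinearMap.coe_comp, Function.comp_apply,
    LinearMap.coe_proj, Function.eval, hgu]
  rw [e.symm.sum_comp (fun j => B.equivFun ⟨u, huV⟩ j • (j : F))]
  exact hB

namespace PointedCone

variable (C : PointedCone ℝ F)

theorem map_sum_eq_prod {M : Type*} [CommMonoid M] {φ : F → M}
    (hmul : ∀ x ∈ C, ∀ y ∈ C, φ (x + y) = φ x * φ y) (h0 : φ 0 = 1)
    {ι : Type*} (s : Finset ι) {x : ι → F} (hx : ∀ i ∈ s, x i ∈ C) :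
    φ (∑ i ∈ s, x i) = ∏ i ∈ s, φ (x i) := by
  classical
  induction s using Finset.induction_on with
  | empty => simpa using h0
  | insert j s hj ih =>
    have hxs : ∀ i ∈ s, x i ∈ C := fun i hi => hx i (Finset.mem_insert_of_mem hi)
    rw [Finset.sum_insert hj, Finset.prod_insert hj, hmul _ (hx j (Finset.mem_insert_self j s))
      _ (C.sum_mem hxs), ih hxs]

theorem tendsto_one_of_map_add_eq_mul [FiniteDimensional ℝ F] {𝕜 : Type*} [NormedField 𝕜]
    {φ : F → 𝕜} (hmul : ∀ x ∈ C, ∀ y ∈ C, φ (x + y) = φ x * φ y)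
    (hray : ∀ x ∈ C, Tendsto (fun a : ℝ => φ (a • x)) (𝓝[≥] 0) (𝓝 1)) :
    Tendsto φ (𝓝[C] 0) (𝓝 1) := by
  have h0 : φ 0 = 1 := by simpa using hray 0 C.zero_mem
  obtain ⟨n, b, c, hbC, hcb⟩ := exists_sum_smul_eq_of_mem (C : Set F)
  have hrays (g : ℝ → ℝ) (hg : Continuous g) (hg0 : g 0 = 0) (hgnn : ∀ a, 0 ≤ g a) :
      Tendsto (fun u => φ (∑ i, g (c i u) • b i)) (𝓝[C] 0) (𝓝 1) := by
    have hprod : ∀ u, φ (∑ i, g (c i u) • b i) = ∏ i, φ (g (c i u) • b i) := fun u =>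
      C.map_sum_eq_prod hmul h0 _ fun i _ => C.smul_mem (hgnn _) (hbC i)
    simp_rw [hprod]
    rw [← Finset.prod_const_one]
    refine tendsto_finsetProd _ fun i _ => (hray (b i) (hbC i)).comp ?_
    refine tendsto_nhdsWithin_iff.2 ⟨?_, .of_forall fun u => hgnn _⟩
    have := ((hg.comp (c i).continuous).tendsto 0).mono_left
      (nhdsWithin_le_nhds (s := (C : Set F)))
    simpa [Function.comp_def, hg0] using this
  have hpos := hrays posPart continuous_posPart (by simp) posPart_nonneg
  have hneg := hrays negPart continuous_negPart (by simp) negPart_nonneg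
  have hquot : ∀ u ∈ C, φ u * φ (∑ i, (c i u)⁻ • b i) = φ (∑ i, (c i u)⁺ • b i) := by
    intro u hu
    rw [← hmul _ hu _ (C.sum_mem fun i _ => C.smul_mem (negPart_nonneg _) (hbC i))]
    congr 1
    nth_rewrite 1 [← hcb u hu]
    rw [← Finset.sum_add_distrib]
    refine Finset.sum_congr rfl fun i _ => ?_
    rw [← add_smul, ← sub_eq_iff_eq_add.1 (posPart_sub_negPart (c i u))]
  have hdiv := hpos.div hneg one_ne_zero
  rw [div_one] at hdiv
  refine hdiv.congr' ?_
  filter_upwards [self_mem_nhdsWithin, hneg.eventually_ne one_ne_zero] with u hu hne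
  rw [Pi.div_apply, ← hquot u hu, mul_div_cancel_right₀ _ hne]

end PointedCone

end ConeContinuity

namespace MeasureTheory

section WeakConvergence

variable {E : Type*} {ι : Type*} {l : Filter ι}

theorem ProbabilityMeasure.tendsto_charFun_of_tendsto [NormedAddCommGroup E]
    [InnerProductSpace ℝ E] [MeasurableSpace E] [BorelSpace E]
    {ν : ι → ProbabilityMeasure E} {ν₀ : ProbabilityMeasure E} (h : Tendsto ν l (𝓝 ν₀)) (t : E) :
    Tendsto (fun i => charFun (ν i : Measure E) t) l (𝓝 (charFun (ν₀ : Measure E) t)) := by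
  simp_rw [charFun_eq_integral_innerProbChar]
  exact (ProbabilityMeasure.tendsto_iff_forall_integral_rclike_tendsto ℂ).1 h
    (BoundedContinuousFunction.innerProbChar t)

theorem ProbabilityMeasure.tendsto_of_tendsto_charFun' [NormedAddCommGroup E]
    [InnerProductSpace ℝ E] [FiniteDimensional ℝ E] [MeasurableSpace E] [BorelSpace E]
    [l.IsCountablyGenerated] {ν : ι → ProbabilityMeasure E} {ν₀ : ProbabilityMeasure E}
    (h : ∀ t, Tendsto (fun i => charFun (ν i : Measure E) t) l (𝓝 (charFun (ν₀ : Measure E) t))) :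
    Tendsto ν l (𝓝 ν₀) :=
  tendsto_of_seq_tendsto fun _ hx =>
    ProbabilityMeasure.tendsto_of_tendsto_charFun fun t => (h t).comp hx

theorem tendsto_integral_of_tendsto_integral_bcf [PseudoMetricSpace E] [MeasurableSpace E]
    [OpensMeasurableSpace E] {ν : ι → Measure E} {x₀ : E}
    (hν : ∀ᶠ i in l, IsProbabilityMeasure (ν i))
    (hlim : ∀ g : E →ᵇ ℝ, Tendsto (fun i => ∫ x, g x ∂ν i) l (𝓝 (g x₀)))
    {H : E → ℝ} (hHm : Measurable H) {M : ℝ} (hHb : ∀ x, |H x| ≤ M) (hH : ContinuousAt H x₀) :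
    Tendsto (fun i => ∫ x, H x ∂ν i) l (𝓝 (H x₀)) := by
  have hM : 0 ≤ M := (abs_nonneg _).trans (hHb x₀)
  refine Metric.tendsto_nhds.2 fun ε hε => ?_
  obtain ⟨δ, hδ, hHδ⟩ := Metric.continuousAt_iff.1 hH (ε / 2) (half_pos hε)
  -- `g` vanishes at `x₀` and is `1` off the `δ`-ball, so that `|H - H x₀| ≤ ε / 2 + 2 M g`
  let g : E →ᵇ ℝ := BoundedContinuousFunction.mkOfBound
    ⟨fun x => min 1 (dist x x₀ / δ), by fun_prop⟩ 1 fun x y =>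
      Real.dist_le_of_mem_Icc_01 ⟨le_min zero_le_one (by positivity), min_le_left _ _⟩
        ⟨le_min zero_le_one (by positivity), min_le_left _ _⟩
  have hg : ∀ x, |H x - H x₀| ≤ ε / 2 + 2 * M * g x := by
    intro x
    have hgx : g x = min 1 (dist x x₀ / δ) := rfl
    by_cases hx : dist x x₀ < δ
    · have := hHδ hx
      rw [Real.dist_eq] at this
      nlinarith [show 0 ≤ g x from hgx ▸ le_min zero_le_one (by positivity)]
    · have : g x = 1 := min_eq_left ((le_div_iff₀ hδ).2 (by linarith [not_lt.1 hx]))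
      rw [this]
      linarith [abs_sub (H x) (H x₀), hHb x, hHb x₀]
  have hsmall : ∀ᶠ i in l, 2 * M * ∫ x, g x ∂ν i < ε / 2 :=
    ((hlim g).const_mul (2 * M)).eventually (gt_mem_nhds (by simp [g, half_pos hε]))
  filter_upwards [hν, hsmall] with i hi hsi
  have hHi : Integrable H (ν i) :=
    (integrable_const M).mono' hHm.aestronglyMeasurable (.of_forall fun x => hHb x)
  rw [Real.dist_eq]
  calc |∫ x, H x ∂ν i - H x₀| = |∫ x, (H x - H x₀) ∂ν i| := by
        rw [integral_sub hHi (integrable_const _), integral_const]; simp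
    _ ≤ ∫ x, |H x - H x₀| ∂ν i := abs_integral_le_integral_abs
    _ ≤ ∫ x, (ε / 2 + 2 * M * g x) ∂ν i :=
        integral_mono (hHi.sub (integrable_const _)).abs
          ((integrable_const _).add ((g.integrable _).const_mul _)) hg
    _ = ε / 2 + 2 * M * ∫ x, g x ∂ν i := by
        rw [integral_add (integrable_const _) ((g.integrable _).const_mul _), integral_const,
          integral_const_mul]; simp
    _ < ε := by linarith

end WeakConvergence

namespace Measure

variable {α β : Type*} [MeasurableSpace α] [MeasurableSpace β]

theorem comp_map (κ : Kernel α β) {γ : Type*} [MeasurableSpace γ] {f : γ → α}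
    (hf : Measurable f) (μ : Measure γ) : κ ∘ₘ (μ.map f) = (κ.comap f hf) ∘ₘ μ := by
  rw [← deterministic_comp_eq_map hf, comp_assoc, Kernel.comp_deterministic_eq_comap]

theorem comp_conv_comp [AddMonoid β] [MeasurableAdd₂ β] (κ η : Kernel α β)
    [IsSFiniteKernel κ] [IsSFiniteKernel η] (ρ₁ ρ₂ : Measure α) [SFinite ρ₁] [SFinite ρ₂] :
    (κ ∘ₘ ρ₁) ∗ (η ∘ₘ ρ₂) = ((κ ∥ₖ η).map (fun p => p.1 + p.2)) ∘ₘ (ρ₁.prod ρ₂) := by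
  rw [conv, prod_comp_left, prod_comp_right, comp_assoc, Kernel.parallelComp_comp_parallelComp,
    Kernel.id_comp, Kernel.comp_id, map_comp _ _ measurable_add]

theorem integral_comp {E : Type*} [NormedAddCommGroup E] [NormedSpace ℝ E] (κ : Kernel α β)
    (μ : Measure α) {f : β → E} (hf : Integrable f (κ ∘ₘ μ)) :
    ∫ x, f x ∂(κ ∘ₘ μ) = ∫ a, ∫ x, f x ∂κ a ∂μ := by
  rw [comp_eq_comp_const_apply] at hf ⊢
  rw [Kernel.integral_comp hf, Kernel.const_apply]

end Measure

end MeasureTheory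

namespace ProbabilityTheory.Kernel

variable {F G : Type*} [MeasurableSpace F] [MeasurableSpace G] [Zero G] {K : Set F}
  {μ : F → Measure G}

open scoped Classical in
def extendByDirac (hK : MeasurableSet K) (hμ : Measurable μ) : Kernel F G :=
  piecewise hK ⟨μ, hμ⟩ (const F (Measure.dirac 0))

variable (hK : MeasurableSet K) (hμ : Measurable μ) {u : F}

theorem extendByDirac_of_mem (hu : u ∈ K) : extendByDirac hK hμ u = μ u := by
  simp [extendByDirac, piecewise_apply, hu]

theorem extendByDirac_of_notMem (hu : u ∉ K) : extendByDirac hK hμ u = Measure.dirac 0 := by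
  simp [extendByDirac, piecewise_apply, hu]

theorem isMarkovKernel_extendByDirac (h : ∀ u ∈ K, IsProbabilityMeasure (μ u)) :
    IsMarkovKernel (extendByDirac hK hμ) := by
  refine ⟨fun u => ?_⟩
  by_cases hu : u ∈ K
  · rw [extendByDirac_of_mem hK hμ hu]
    exact h u hu
  · rw [extendByDirac_of_notMem hK hμ hu]
    infer_instance

theorem bind_eq_extendByDirac_comp {ρ : Measure F} (hρ : ρ Kᶜ = 0) :
    ρ.bind μ = extendByDirac hK hμ ∘ₘ ρ := by
  refine Measure.bind_congr_right ?_
  filter_upwards [measure_eq_zero_iff_ae_notMem.1 hρ] with u hu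
  rw [extendByDirac_of_mem hK hμ (by simpa using hu)]

end ProbabilityTheory.Kernel

namespace IsConvSemigroup

variable {F G : Type*} [NormedAddCommGroup F] [InnerProductSpace ℝ F]
  [NormedAddCommGroup G] [InnerProductSpace ℝ G] [MeasurableSpace G] [BorelSpace G]
  {K : Set F} {μ : F → Measure G}

theorem apply_zero (hμ : IsConvSemigroup K μ) (h0 : (0 : F) ∈ K) : μ 0 = Measure.dirac 0 := by
  have := hμ.1 0 h0
  refine ext_of_forall_integral_eq_of_IsFiniteMeasure fun f => ?_
  simpa using hμ.2.2 0 h0 f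

variable [MeasurableSpace F] [BorelSpace F] (hK : IsCone K) (hμm : Measurable μ)

local notation "κ" => Kernel.extendByDirac hK.measurableSet hμm

theorem isMarkovKernel_extendByDirac (hμ : IsConvSemigroup K μ) : IsMarkovKernel κ :=
  Kernel.isMarkovKernel_extendByDirac _ _ hμ.1

theorem extendByDirac_zero (hμ : IsConvSemigroup K μ) : κ 0 = Measure.dirac 0 := by
  rw [Kernel.extendByDirac_of_mem _ _ hK.zero_mem, hμ.apply_zero hK.zero_mem]

theorem extendByDirac_conv (hμ : IsConvSemigroup K μ) {u v : F} (hu : u ∈ K) (hv : v ∈ K) :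
    κ u ∗ κ v = κ (u + v) := by
  rw [Kernel.extendByDirac_of_mem _ _ hu, Kernel.extendByDirac_of_mem _ _ hv,
    Kernel.extendByDirac_of_mem _ _ (hK.add_mem hu hv)]
  exact hμ.2.1 u hu v hv

theorem tendsto_charFun_extendByDirac_smul (hμ : IsConvSemigroup K μ) {v : F} (hv : v ∈ K)
    (t : G) : Tendsto (fun a : ℝ => charFun (κ (a • v)) t) (𝓝[≥] 0) (𝓝 1) := by
  have := hμ.isMarkovKernel_extendByDirac hK hμm
  let P : F → ProbabilityMeasure G := fun u => ⟨κ u, inferInstance⟩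
  have hP : Tendsto (fun a : ℝ => P (a • v)) (𝓝[>] 0) (𝓝 (diracProba 0)) := by
    refine ProbabilityMeasure.tendsto_iff_forall_integral_tendsto.2 fun f => ?_
    refine ((hμ.2.2 v hv f).congr' ?_).trans (by simp [diracProba])
    filter_upwards [self_mem_nhdsWithin] with a (ha : 0 < a)
    simp [P, Kernel.extendByDirac_of_mem _ _ (hK.smul_mem ha.le hv)]
  rw [← Ioi_insert, nhdsWithin_insert, tendsto_sup, tendsto_pure_left]
  refine ⟨fun s hs => ?_, ?_⟩
  · simpa [hμ.extendByDirac_zero hK hμm] using mem_of_mem_nhds hs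
  · simpa [P, diracProba] using ProbabilityMeasure.tendsto_charFun_of_tendsto hP t

theorem continuousAt_integral_extendByDirac [FiniteDimensional ℝ F] [FiniteDimensional ℝ G]
    (hμ : IsConvSemigroup K μ) (f : G →ᵇ ℝ) :
    ContinuousAt (fun u => ∫ x, f x ∂(κ u)) 0 := by
  have := hμ.isMarkovKernel_extendByDirac hK hμm
  let P : F → ProbabilityMeasure G := fun u => ⟨κ u, inferInstance⟩
  have hcharFun (t : G) : Tendsto (fun u => charFun (P u : Measure G) t) (𝓝 0) (𝓝 1) := by
    rw [← nhdsWithin_univ, ← union_compl_self K, nhdsWithin_union]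
    refine tendsto_sup.2 ⟨hK.toPointedCone.tendsto_one_of_map_add_eq_mul
      (fun x hx y hy => ?_) (fun x hx => ?_), ?_⟩
    · simp only [P, ← hμ.extendByDirac_conv hK hμm hx hy]
      exact charFun_conv t
    · exact hμ.tendsto_charFun_extendByDirac_smul hK hμm hx t
    · refine tendsto_const_nhds.congr' ?_
      filter_upwards [self_mem_nhdsWithin] with u hu
      simp [P, Kernel.extendByDirac_of_notMem _ _ hu]
  have hP : Tendsto P (𝓝 0) (𝓝 (diracProba 0)) :=
    ProbabilityMeasure.tendsto_of_tendsto_charFun' fun t => by simpa [diracProba] using hcharFun t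
  rw [ContinuousAt, hμ.extendByDirac_zero hK hμm]
  simpa [P, diracProba] using ProbabilityMeasure.tendsto_iff_forall_integral_tendsto.1 hP f

theorem tendsto_integral_extendByDirac_comp [FiniteDimensional ℝ F] [FiniteDimensional ℝ G]
    (hμ : IsConvSemigroup K μ) {ι : Type*} {l : Filter ι} {ν : ι → Measure F}
    (hν : ∀ᶠ i in l, IsProbabilityMeasure (ν i))
    (hlim : ∀ g : F →ᵇ ℝ, Tendsto (fun i => ∫ x, g x ∂ν i) l (𝓝 (g 0))) (f : G →ᵇ ℝ) :
    Tendsto (fun i => ∫ x, f x ∂(κ ∘ₘ ν i)) l (𝓝 (f 0)) := by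
  have := hμ.isMarkovKernel_extendByDirac hK hμm
  have hG := tendsto_integral_of_tendsto_integral_bcf hν hlim
    (f.continuous.stronglyMeasurable.integral_kernel :
      StronglyMeasurable fun u => ∫ x, f x ∂(κ u)).measurable
    (fun u => by simpa using f.norm_integral_le_norm (κ u))
    (hμ.continuousAt_integral_extendByDirac hK hμm f)
  rw [hμ.extendByDirac_zero hK hμm, integral_dirac] at hG
  refine hG.congr' ?_
  filter_upwards [hν] with i hi
  rw [Measure.integral_comp _ _ (f.integrable _)]

theorem extendByDirac_comp_conv_comp [SecondCountableTopology F] [SecondCountableTopology G]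
    (hμ : IsConvSemigroup K μ) {ρ₁ ρ₂ : Measure F} [SFinite ρ₁] [SFinite ρ₂]
    (h₁ : ρ₁ Kᶜ = 0) (h₂ : ρ₂ Kᶜ = 0) : (κ ∘ₘ ρ₁) ∗ (κ ∘ₘ ρ₂) = κ ∘ₘ (ρ₁ ∗ ρ₂) := by
  have := hμ.isMarkovKernel_extendByDirac hK hμm
  rw [Measure.comp_conv_comp, Measure.conv, Measure.comp_map _ measurable_add]
  refine Measure.comp_congr ?_
  filter_upwards [Measure.quasiMeasurePreserving_fst.ae (measure_eq_zero_iff_ae_notMem.1 h₁),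
    Measure.quasiMeasurePreserving_snd.ae (measure_eq_zero_iff_ae_notMem.1 h₂)] with p hp₁ hp₂
  rw [Kernel.map_apply _ measurable_add, Kernel.parallelComp_apply, Kernel.comap_apply]
  exact hμ.extendByDirac_conv hK hμm (not_not.1 hp₁) (not_not.1 hp₂)

end IsConvSemigroup

/-- Subordination of a K₂-parameter convolution semigroup by a K₁-parameter
convolution semigroup supported on K₂ yields a K₁-parameter convolution semigroup. -/
theorem subordination_is_conv_semigroup {N₁ N₂ d : ℕ}
    (K₁ : Set (Euc N₁)) (K₂ : Set (Euc N₂))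
    (μ : Euc N₂ → Measure (Euc d)) (ρ : Euc N₁ → Measure (Euc N₂))
    (hK₁ : IsCone K₁) (hK₂ : IsCone K₂)
    (hμ : IsConvSemigroup K₂ μ) (hμm : Measurable μ)
    (hρ : IsConvSemigroup K₁ ρ) (hsupp : ∀ s ∈ K₁, ρ s K₂ᶜ = 0) :
    IsConvSemigroup K₁ (fun s => (ρ s).bind μ) := by
  set κ := Kernel.extendByDirac hK₂.measurableSet hμm
  have := hμ.isMarkovKernel_extendByDirac hK₂ hμm
  have hσ (s : Euc N₁) (hs : s ∈ K₁) : (ρ s).bind μ = κ ∘ₘ ρ s :=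
    Kernel.bind_eq_extendByDirac_comp _ _ (hsupp s hs)
  refine ⟨fun s hs => ?_, fun s₁ hs₁ s₂ hs₂ => ?_, fun s hs f => ?_⟩
  · have := hρ.1 s hs
    dsimp only
    rw [hσ s hs]
    infer_instance
  · have := hρ.1 s₁ hs₁
    have := hρ.1 s₂ hs₂
    dsimp only
    rw [hσ s₁ hs₁, hσ s₂ hs₂, hσ _ (hK₁.add_mem hs₁ hs₂), ← hρ.2.1 s₁ hs₁ s₂ hs₂]
    exact hμ.extendByDirac_comp_conv_comp hK₂ hμm (hsupp s₁ hs₁) (hsupp s₂ hs₂)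
  · have hts : ∀ᶠ t in 𝓝[>] (0 : ℝ), t • s ∈ K₁ := by
      filter_upwards [self_mem_nhdsWithin] with t (ht : 0 < t) using hK₁.smul_mem ht.le hs
    refine (hμ.tendsto_integral_extendByDirac_comp hK₂ hμm (hts.mono fun t ht => hρ.1 _ ht)
      (hρ.2.2 s hs) f).congr' ?_
    filter_upwards [hts] with t ht
    rw [hσ _ ht]
end
end

section
/- Let {μ_u : u ∈ K₂} be a K₂-parameter convolution semigroup on ℝ^d, ρ an infinitely divisible probability measure on ℝ^{N₂} with Supp(ρ) ⊆ K₂, and define σ(B) = ∫_{K₂} μ_u(B) ρ(du). Then σ is infinitely divisible. -/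
open MeasureTheory Filter Set
open scoped Topology Pointwise ENNReal NNReal BoundedContinuousFunction

noncomputable section

/-! If `ρ = ν^{*k}`, then `ν` also lives on the cone `K₂`: a support point `x` of `ν` gives the
support point `k • x` of `ρ`, and `K₂` is closed and stable under scaling. On measures living
on `K₂`, subordination `ν ↦ ∫ μ_u ν(du)` turns convolution into convolution because
`μ_{u₁} * μ_{u₂} = μ_{u₁+u₂}`, so `σ = (∫ μ_u ν(du))^{*k}`. To use Markov-kernel measurability,
`μ` is first changed off `K₂`, which does not affect any of these integrals. -/

open ProbabilityTheory

namespace MeasureTheory.Measure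

theorem add_mem_support_conv {E : Type*} [AddMonoid E] [TopologicalSpace E] [ContinuousAdd E]
    [MeasurableSpace E] [MeasurableAdd₂ E] {μ ν : Measure E} [SFinite ν] {a b : E}
    (ha : a ∈ μ.support) (hb : b ∈ ν.support) : a + b ∈ (μ ∗ ν).support := by
  rw [mem_support_iff_forall] at ha hb ⊢
  intro W hW
  obtain ⟨U, hU, V, hV, hUV⟩ := mem_nhds_prod_iff.mp ((continuous_add.tendsto (a, b)) hW)
  calc 0 < μ U * ν V := ENNReal.mul_pos (ha U hU).ne' (hb V hV).ne'
    _ = μ.prod ν (U ×ˢ V) := (prod_prod U V).symm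
    _ ≤ μ.prod ν ((fun p : E × E ↦ p.1 + p.2) ⁻¹' W) := measure_mono hUV
    _ ≤ (μ ∗ ν) W := le_map_apply (by fun_prop) W

section Bind

variable {S E : Type*} [AddMonoid S] [MeasurableSpace S] [MeasurableAdd₂ S]
  [AddMonoid E] [MeasurableSpace E] [MeasurableAdd₂ E]

theorem ae_mem_conv {K : Set S} (hK : MeasurableSet K)
    (hadd : ∀ s₁ ∈ K, ∀ s₂ ∈ K, s₁ + s₂ ∈ K) {ν₁ ν₂ : Measure S} [SFinite ν₁] [SFinite ν₂]
    (h₁ : ∀ᵐ s ∂ν₁, s ∈ K) (h₂ : ∀ᵐ s ∂ν₂, s ∈ K) : ∀ᵐ s ∂(ν₁ ∗ ν₂), s ∈ K := by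
  refine (ae_map_iff (by fun_prop) hK).mpr ((ae_prod_iff_ae_ae (measurable_add hK)).mpr ?_)
  filter_upwards [h₁] with s₁ hs₁
  filter_upwards [h₂] with s₂ hs₂
  exact hadd s₁ hs₁ s₂ hs₂

theorem bind_conv {κ : Kernel S E} [IsSFiniteKernel κ] {K : Set S}
    (hκ : ∀ s₁ ∈ K, ∀ s₂ ∈ K, κ (s₁ + s₂) = κ s₁ ∗ κ s₂)
    {ν₁ ν₂ : Measure S} [SFinite ν₁] [SFinite ν₂]
    (h₁ : ∀ᵐ s ∂ν₁, s ∈ K) (h₂ : ∀ᵐ s ∂ν₂, s ∈ K) :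
    (ν₁ ∗ ν₂).bind κ = ν₁.bind κ ∗ ν₂.bind κ := by
  refine ext_of_lintegral _ fun f hf ↦ ?_
  have hg : Measurable fun q : E × S ↦ ∫⁻ y, f (q.1 + y) ∂κ q.2 :=
    (hf.comp (measurable_fst.fst.add measurable_snd)).lintegral_kernel_prod_right'
      (κ := κ.prodMkLeft E)
  have hβ (x : E) : ∫⁻ y, f (x + y) ∂ν₂.bind κ = ∫⁻ s₂, ∫⁻ y, f (x + y) ∂κ s₂ ∂ν₂ :=
    lintegral_bind κ.aemeasurable (hf.comp (measurable_const_add x)).aemeasurable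
  rw [lintegral_bind κ.aemeasurable hf.aemeasurable,
    lintegral_conv (hf.lintegral_kernel (κ := κ)), lintegral_conv hf,
    lintegral_bind κ.aemeasurable (by fun_prop)]
  simp_rw [hβ]
  refine lintegral_congr_ae ?_
  filter_upwards [h₁] with s₁ hs₁
  rw [lintegral_lintegral_swap (f := fun x s₂ ↦ ∫⁻ y, f (x + y) ∂κ s₂) hg.aemeasurable]
  refine lintegral_congr_ae ?_
  filter_upwards [h₂] with s₂ hs₂
  rw [hκ s₁ hs₁ s₂ hs₂, lintegral_conv hf]

end Bind

end MeasureTheory.Measure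

open MeasureTheory.Measure

theorem ProbabilityTheory.Kernel.exists_isMarkovKernel_eqOn {α β : Type*} [MeasurableSpace α]
    [MeasurableSpace β] [Nonempty β] {K : Set α} (hK : MeasurableSet K) {μ : α → Measure β}
    (hμ : Measurable μ) (hprob : ∀ s ∈ K, IsProbabilityMeasure (μ s)) :
    ∃ κ : Kernel α β, IsMarkovKernel κ ∧ EqOn κ μ K := by
  classical
  let κ : Kernel α β :=
    ⟨K.piecewise μ fun _ ↦ dirac (Classical.arbitrary β), hμ.piecewise hK measurable_const⟩
  refine ⟨κ, ⟨fun s ↦ ?_⟩, fun s hs ↦ by simp [κ, hs]⟩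
  by_cases hs : s ∈ K
  · simpa [κ, hs] using hprob s hs
  · simpa [κ, hs] using inferInstanceAs (IsProbabilityMeasure (dirac (Classical.arbitrary β)))

theorem IsCone.add_mem_s19 {F : Type*} [NormedAddCommGroup F] [InnerProductSpace ℝ F] {K : Set F}
    (hK : IsCone K) {a b : F} (ha : a ∈ K) (hb : b ∈ K) : a + b ∈ K := by
  obtain ⟨-, -, hconv, hsmul, -, -⟩ := hK
  have h := hsmul 2 zero_le_two _ (hconv ha hb one_half_pos.le one_half_pos.le (add_halves 1))
  rwa [smul_add, smul_smul, smul_smul, mul_one_div_cancel two_ne_zero, one_smul, one_smul] at h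

section Powers

theorem nconv_succ {F : Type*} [NormedAddCommGroup F] [MeasurableSpace F] (ν : Measure F)
    (k : ℕ) : nconv ν (k + 1) = ν ∗ nconv ν k := rfl

variable {F G : Type*} [NormedAddCommGroup F] [MeasurableSpace F] [MeasurableAdd₂ F]
  [NormedAddCommGroup G] [MeasurableSpace G] [MeasurableAdd₂ G]

theorem nconv_one (ν : Measure F) [SFinite ν] : nconv ν 1 = ν :=
  conv_dirac_zero ν

instance sFinite_nconv (ν : Measure F) [SFinite ν] : ∀ k, SFinite (nconv ν k)
  | 0 => inferInstanceAs (SFinite (dirac 0))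
  | k + 1 => have := sFinite_nconv ν k; inferInstanceAs (SFinite (ν ∗ nconv ν k))

theorem nsmul_mem_support_nconv {ν : Measure F} [SFinite ν] {x : F} (hx : x ∈ ν.support) :
    ∀ k : ℕ, k • x ∈ (nconv ν k).support
  | 0 => by
      rw [zero_smul]
      exact (mem_support_iff_forall _).mpr fun U hU ↦ by
        rw [nconv, dirac_apply_of_mem (mem_of_mem_nhds hU)]
        exact one_pos
  | k + 1 => by
      rw [succ_nsmul', nconv_succ]
      exact add_mem_support_conv hx (nsmul_mem_support_nconv hx k)

theorem ae_mem_of_ae_mem_nconv [NormedSpace ℝ F] [HereditarilyLindelofSpace F] {K : Set F}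
    (hKc : IsClosed K) (hKs : ∀ c : ℝ, 0 ≤ c → ∀ x ∈ K, c • x ∈ K) {ν : Measure F} [SFinite ν]
    {k : ℕ} (hk : k ≠ 0) (hνk : ∀ᵐ s ∂(nconv ν k), s ∈ K) : ∀ᵐ s ∂ν, s ∈ K := by
  filter_upwards [support_mem_ae (μ := ν)] with x hx
  have hkx : k • x ∈ K := support_subset_of_isClosed hKc hνk (nsmul_mem_support_nconv hx k)
  simpa [← Nat.cast_smul_eq_nsmul ℝ, smul_smul, hk] using hKs (k : ℝ)⁻¹ (by positivity) _ hkx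

theorem ae_mem_nconv_succ {K : Set F} (hK : MeasurableSet K)
    (hadd : ∀ s₁ ∈ K, ∀ s₂ ∈ K, s₁ + s₂ ∈ K) {ν : Measure F} [SFinite ν] (hν : ∀ᵐ s ∂ν, s ∈ K) :
    ∀ k : ℕ, ∀ᵐ s ∂(nconv ν (k + 1)), s ∈ K
  | 0 => by rwa [nconv_one]
  | k + 1 => ae_mem_conv hK hadd hν (ae_mem_nconv_succ hK hadd hν k)

theorem bind_nconv_succ {κ : Kernel F G} [IsSFiniteKernel κ]
    {K : Set F} (hK : MeasurableSet K) (hadd : ∀ s₁ ∈ K, ∀ s₂ ∈ K, s₁ + s₂ ∈ K)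
    (hκ : ∀ s₁ ∈ K, ∀ s₂ ∈ K, κ (s₁ + s₂) = κ s₁ ∗ κ s₂) {ν : Measure F} [SFinite ν]
    (hν : ∀ᵐ s ∂ν, s ∈ K) :
    ∀ k : ℕ, (nconv ν (k + 1)).bind κ = nconv (ν.bind κ) (k + 1)
  | 0 => by rw [nconv_one, nconv_one]
  | k + 1 => by
      rw [nconv_succ, nconv_succ (ν.bind κ), bind_conv hκ hν (ae_mem_nconv_succ hK hadd hν k),
        bind_nconv_succ hK hadd hκ hν k]

end Powers

theorem subordination_by_ID_is_ID_general {N₂ d : ℕ} (K₂ : Set (Euc N₂)) (hK₂ : IsCone K₂)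
    (μ : Euc N₂ → Measure (Euc d)) (hμ : IsConvSemigroup K₂ μ) (hμm : Measurable μ)
    (ρ : Measure (Euc N₂)) (hρid : IsID ρ)
    (hsupp : ρ K₂ᶜ = 0) :
    IsID (ρ.bind μ) := by
  obtain ⟨hprob, hsg, -⟩ := hμ
  obtain ⟨-, hK₂c, -, hK₂s, -, -⟩ := id hK₂
  have hK₂add : ∀ s₁ ∈ K₂, ∀ s₂ ∈ K₂, s₁ + s₂ ∈ K₂ := fun _ h₁ _ h₂ ↦ hK₂.add_mem_s19 h₁ h₂
  obtain ⟨κ, hκ, hκμ⟩ := Kernel.exists_isMarkovKernel_eqOn hK₂c.measurableSet hμm hprob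
  have hκsg : ∀ s₁ ∈ K₂, ∀ s₂ ∈ K₂, κ (s₁ + s₂) = κ s₁ ∗ κ s₂ := fun s₁ h₁ s₂ h₂ ↦ by
    rw [hκμ h₁, hκμ h₂, hκμ (hK₂add s₁ h₁ s₂ h₂)]
    exact (hsg s₁ h₁ s₂ h₂).symm
  have hρK : ∀ᵐ s ∂ρ, s ∈ K₂ := mem_ae_iff.mpr hsupp
  rw [bind_congr_right (hρK.mono fun s hs ↦ (hκμ hs).symm)]
  intro k hk
  obtain ⟨ν, hν, rfl⟩ := hρid k hk
  have hνK := ae_mem_of_ae_mem_nconv hK₂c hK₂s (by omega) hρK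
  obtain ⟨j, rfl⟩ := Nat.exists_eq_add_of_le' hk
  exact ⟨ν.bind κ, inferInstance,
    (bind_nconv_succ hK₂c.measurableSet hK₂add hκsg hνK j).symm⟩

/-- subordination of a K₂-parameter convolution semigroup by an infinitely
divisible probability measure supported on K₂ yields an infinitely divisible measure. -/
theorem subordination_by_ID_is_ID {N₂ d : ℕ} (K₂ : Set (Euc N₂)) (hK₂ : IsCone K₂)
    (μ : Euc N₂ → Measure (Euc d)) (hμ : IsConvSemigroup K₂ μ) (hμm : Measurable μ)
    (ρ : Measure (Euc N₂)) [IsProbabilityMeasure ρ] (hρid : IsID ρ)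
    (hsupp : ρ K₂ᶜ = 0) :
    IsID (ρ.bind μ) :=
  subordination_by_ID_is_ID_general K₂ hK₂ μ hμ hμm ρ hρid hsupp
end
end
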